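/- Let p be an odd prime, r ≥ 2, s ≥ 1, n = 2^r·p^s, N = 2^{r−2}·p^s − 1, and let C be the cosine matrix of size N+1. Then C is invertible and its Frobenius condition number satisfies κ_F(C) = ‖C‖_F·‖C⁻¹‖_F < √2·(N+1). -/

import Mathlib

/-!
The columns of `C` are the Chebyshev polynomials `T_j`, weighted by `1` for `j = 0` and by `2`
otherwise, evaluated at the Chebyshev nodes `cos ((2i+1)π/(2(N+1)))`, where `n = 4(N+1)`.
The discrete orthogonality of `T_0, …, T_N` at these nodes makes the columns pairwise orthogonal:
`Cᵀ C = diag(w)` with `w_0 = N+1` and `w_j = 2(N+1)` otherwise. Hence `C⁻¹ = diag(w)⁻¹ Cᵀ`,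
`‖C‖_F² = ∑ w_j = (N+1)(2N+1)` and `‖C⁻¹‖_F² = ∑ w_j⁻¹ = (N+2)/(2(N+1))`, so
`κ_F(C)² = (2N+1)(N+2)/2 < 2(N+1)²`.
-/

/-- The Frobenius norm of a real square matrix. -/
noncomputable def frobNorm {n : ℕ} (A : Matrix (Fin n) (Fin n) ℝ) : ℝ :=
  Real.sqrt (∑ i, ∑ j, (A i j) ^ 2)

open Matrix Real Finset Polynomial.Chebyshev

theorem sum_range_cos_mul_chebyshev_node (n : ℕ) {k : ℤ} (hk : |k| < 2 * n) :
    ∑ i ∈ range n, cos (k * ((2 * i + 1) / (2 * n) * π)) = if k = 0 then (n : ℝ) else 0 := by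
  split_ifs with h0
  · simp [h0]
  have hn : n ≠ 0 := by rintro rfl; exact (abs_nonneg k).not_gt (by simpa using hk)
  have hdvd : ¬ (2 * n : ℤ) ∣ k := fun h => h0 (Int.eq_zero_of_abs_lt_dvd h hk)
  simpa [sumZeroes, T_real_cos, hn, pi_ne_zero] using sumZeroes_T_of_not_dvd hdvd

theorem frobNorm_sq_eq_trace_transpose_mul_self {n : ℕ} (A : Matrix (Fin n) (Fin n) ℝ) :
    frobNorm A ^ 2 = (Aᵀ * A).trace := by
  rw [frobNorm, sq_sqrt (by positivity), sum_comm]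
  simp [trace, mul_apply, sq]

theorem diagonal_inv_mul_transpose_mul_self {m K : Type*} [Fintype m] [DecidableEq m] [Field K]
    {A : Matrix m m K} {w : m → K} (hA : Aᵀ * A = diagonal w) (hw : ∀ j, w j ≠ 0) :
    diagonal w⁻¹ * Aᵀ * A = 1 := by
  rw [Matrix.mul_assoc, hA, diagonal_mul_diagonal, ← diagonal_one]
  exact congrArg diagonal (funext fun j => inv_mul_cancel₀ (hw j))

theorem frobNorm_mul_frobNorm_inv_sq {n : ℕ} {A : Matrix (Fin n) (Fin n) ℝ} {w : Fin n → ℝ}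
    (hA : Aᵀ * A = diagonal w) (hw : ∀ j, w j ≠ 0) :
    (frobNorm A * frobNorm A⁻¹) ^ 2 = (∑ j, w j) * ∑ j, (w j)⁻¹ := by
  have hinv : A⁻¹ = diagonal w⁻¹ * Aᵀ :=
    inv_eq_left_inv (diagonal_inv_mul_transpose_mul_self hA hw)
  have hgram : A⁻¹ * A⁻¹ᵀ = diagonal w⁻¹ := by
    rw [hinv, transpose_mul, transpose_transpose, diagonal_transpose, Matrix.mul_assoc,
      ← Matrix.mul_assoc Aᵀ, hA, diagonal_mul_diagonal, diagonal_mul_diagonal]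
    exact congrArg diagonal (funext fun j => by simp [hw j])
  rw [mul_pow, frobNorm_sq_eq_trace_transpose_mul_self, frobNorm_sq_eq_trace_transpose_mul_self,
    trace_mul_comm A⁻¹ᵀ, hA, hgram, trace_diagonal, trace_diagonal]
  rfl

def cosineWeight (j : ℕ) : ℝ := if j = 0 then 1 else 2

theorem cosineWeight_pos (j : ℕ) : 0 < cosineWeight j := by
  unfold cosineWeight
  split_ifs <;> norm_num

theorem natCast_mul_cosineWeight_ne_zero {M : ℕ} (j : Fin M) : (M : ℝ) * cosineWeight j ≠ 0 :=
  mul_ne_zero (Nat.cast_ne_zero.mpr j.pos.ne') (cosineWeight_pos j).ne'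

noncomputable def cosineMatrix (M : ℕ) : Matrix (Fin M) (Fin M) ℝ :=
  of fun i j => cosineWeight j * cos ((j : ℕ) * ((2 * (i : ℕ) + 1) / (2 * M) * π))

theorem transpose_cosineMatrix_mul_self (M : ℕ) :
    (cosineMatrix M)ᵀ * cosineMatrix M = diagonal fun j : Fin M => M * cosineWeight j := by
  ext j k
  have hj := j.isLt
  have hk := k.isLt
  calc ((cosineMatrix M)ᵀ * cosineMatrix M) j k
      = cosineWeight j * cosineWeight k / 2 *
          ((∑ i ∈ range M, cos (((j - k : ℤ) : ℝ) * ((2 * i + 1) / (2 * M) * π))) +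
            ∑ i ∈ range M, cos (((j + k : ℤ) : ℝ) * ((2 * i + 1) / (2 * M) * π))) := by
        rw [mul_apply, ← sum_add_distrib, mul_sum, ← Fin.sum_univ_eq_sum_range]
        refine sum_congr rfl fun i _ => ?_
        simp only [transpose_apply, cosineMatrix, of_apply]
        push_cast
        rw [sub_mul, add_mul, ← two_mul_cos_mul_cos]
        ring
    _ = cosineWeight j * cosineWeight k / 2 *
          ((if (j - k : ℤ) = 0 then (M : ℝ) else 0) + if (j + k : ℤ) = 0 then (M : ℝ) else 0) := by
        rw [sum_range_cos_mul_chebyshev_node M (abs_lt.mpr ⟨by omega, by omega⟩),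
          sum_range_cos_mul_chebyshev_node M (abs_lt.mpr ⟨by omega, by omega⟩)]
    _ = (diagonal fun j : Fin M => M * cosineWeight j) j k := by
        rw [diagonal_apply]
        by_cases hjk : j = k
        · subst hjk
          simp only [sub_self, ↓reduceIte, cosineWeight]
          split_ifs <;> first | omega | ring
        · have : (j : ℤ) - k ≠ 0 := by omega
          have : (j : ℤ) + k ≠ 0 := by omega
          simp [*]

theorem isUnit_det_cosineMatrix (M : ℕ) : IsUnit (cosineMatrix M).det :=
  isUnit_det_of_left_inverse <| diagonal_inv_mul_transpose_mul_self
    (transpose_cosineMatrix_mul_self M) natCast_mul_cosineWeight_ne_zero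

theorem cosineMatrix_frobNorm_mul_frobNorm_inv_sq (N : ℕ) :
    (frobNorm (cosineMatrix (N + 1)) * frobNorm (cosineMatrix (N + 1))⁻¹) ^ 2 =
      (2 * N + 1) * (N + 2) / 2 := by
  rw [frobNorm_mul_frobNorm_inv_sq (transpose_cosineMatrix_mul_self (N + 1))
    natCast_mul_cosineWeight_ne_zero]
  simp only [cosineWeight, Fin.sum_univ_succ, Fin.val_zero, Fin.val_succ, ↓reduceIte,
    Nat.succ_ne_zero, sum_const, card_univ, Fintype.card_fin, nsmul_eq_mul]
  push_cast
  field_simp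
  ring

theorem cosine_matrix_cond_lt_two_pow_general (p r s N : ℕ)
    (hr : 2 ≤ r) (hN : N + 1 = 2 ^ (r - 2) * p ^ s)
    (C : Matrix (Fin (N + 1)) (Fin (N + 1)) ℝ)
    (hC : ∀ i j : Fin (N + 1), C i j =
      if j.val = 0 then 1
      else 2 * Real.cos (2 * Real.pi * (2 * i.val + 1) * j.val
        / ((2 : ℝ) ^ r * (p : ℝ) ^ s))) :
    IsUnit C.det ∧ frobNorm C * frobNorm C⁻¹ < Real.sqrt 2 * (N + 1) := by
  have hn : (2 : ℝ) ^ r * (p : ℝ) ^ s = 4 * (N + 1) := by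
    obtain ⟨t, rfl⟩ := Nat.exists_eq_add_of_le' hr
    have hN' : (N : ℝ) + 1 = 2 ^ t * (p : ℝ) ^ s := by exact_mod_cast hN
    rw [hN', pow_add]
    ring
  obtain rfl : C = cosineMatrix (N + 1) := by
    ext i j
    rw [hC, hn, cosineMatrix, of_apply, cosineWeight]
    split_ifs with hj
    · simp [hj]
    · push_cast
      congr 2
      field_simp
      ring
  refine ⟨isUnit_det_cosineMatrix (N + 1), lt_of_pow_lt_pow_left₀ 2 (by positivity) ?_⟩
  rw [cosineMatrix_frobNorm_mul_frobNorm_inv_sq, mul_pow, sq_sqrt zero_le_two]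
  nlinarith

/-- For an odd prime `p`, `r ≥ 2`, `s ≥ 1`, `n = 2^r·p^s`,
`N = 2^{r−2}·p^s − 1`, the cosine matrix `C` of size `N+1` is invertible and its
Frobenius condition number satisfies `κ_F(C) = ‖C‖_F·‖C⁻¹‖_F < √2·(N+1)`. -/
theorem cosine_matrix_cond_lt_two_pow (p r s N : ℕ) (hp : p.Prime) (hodd : Odd p)
    (hr : 2 ≤ r) (hs : 1 ≤ s) (hN : N + 1 = 2 ^ (r - 2) * p ^ s)
    (C : Matrix (Fin (N + 1)) (Fin (N + 1)) ℝ)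
    (hC : ∀ i j : Fin (N + 1), C i j =
      if j.val = 0 then 1
      else 2 * Real.cos (2 * Real.pi * (2 * i.val + 1) * j.val
        / ((2 : ℝ) ^ r * (p : ℝ) ^ s))) :
    IsUnit C.det ∧ frobNorm C * frobNorm C⁻¹ < Real.sqrt 2 * (N + 1) :=
  cosine_matrix_cond_lt_two_pow_general p r s N hr hN C hC
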